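/- The circle strategy is asymptotically optimal: for every ε ∈ (0, 2] there exists d_ε > 0 such that for every d ≥ d_ε, the circle-strategy step lengths for target ratio c = 2 + ε reach the corner after finitely many steps, i.e., there exists n with ∑_{j=1}^{n} arcsin(x_j/d) ≥ π/2; hence the strategy is (2 + ε)-competitive for all d ≥ d_ε, matching the lower bound of 2. -/

import Mathlib

/-- Auxiliary recursion for the circle strategy with target ratio `c` on a
semicircle of diameter `d`.  The value at `n` is the triple
`(xₙ, Sₙ, Aₙ)` where `xₙ` is the `n`-th step length,
`Sₙ = ∑_{j=1}^{n} xⱼ` is the total path length after `n` steps, and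
`Aₙ = ∑_{j=1}^{n} arcsin (xⱼ / d)` is the accumulated angle, so that
`d · sin Aₙ` is the chord from the start to the `n`-th scan point.
The recursion is `x_{n+1} = c·(1 + d·sin Aₙ) − (n+1) − Sₙ` (and `x₁ = c − 1`). -/
noncomputable def circleAux (c d : ℝ) : ℕ → ℝ × ℝ × ℝ
  | 0 => (0, 0, 0)
  | n + 1 =>
    let p := circleAux c d n
    let x := c * (1 + d * Real.sin p.2.2) - ((n : ℝ) + 1) - p.2.1
    (x, p.2.1 + x, p.2.2 + Real.arcsin (x / d))

/-- The accumulated angle `∑_{j=1}^{n} arcsin (xⱼ / d)` of the circle strategy. -/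
noncomputable def circleAngle (c d : ℝ) (n : ℕ) : ℝ := (circleAux c d n).2.2

open Real

set_option maxHeartbeats 1000000

/-- total path length of the circle strategy with ratio `2 + ε` -/
noncomputable def cS (ε d : ℝ) (n : ℕ) : ℝ := (circleAux (2+ε) d n).2.1
/-- accumulated angle of the circle strategy with ratio `2 + ε` -/
noncomputable def cA (ε d : ℝ) (n : ℕ) : ℝ := (circleAux (2+ε) d n).2.2
/-- the (n+1)-st step length of the circle strategy with ratio `2 + ε` -/
noncomputable def cX (ε d : ℝ) (n : ℕ) : ℝ :=
  (2+ε) * (1 + d * Real.sin (cA ε d n)) - ((n : ℝ) + 1) - cS ε d n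

lemma cS_succ (ε d : ℝ) (n : ℕ) : cS ε d (n+1) = cS ε d n + cX ε d n := rfl
lemma cA_succ (ε d : ℝ) (n : ℕ) :
    cA ε d (n+1) = cA ε d n + Real.arcsin (cX ε d n / d) := rfl
lemma cS_zero (ε d : ℝ) : cS ε d 0 = 0 := rfl
lemma cA_zero (ε d : ℝ) : cA ε d 0 = 0 := rfl

lemma my_le_arcsin {t : ℝ} (h0 : 0 ≤ t) (h1 : t ≤ 1) : t ≤ Real.arcsin t := by
  have hπ := Real.pi_gt_three
  have h2 : Real.sin t ≤ t := Real.sin_le h0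
  have h3 : Real.arcsin (Real.sin t) = t :=
    Real.arcsin_sin (by linarith) (by linarith)
  calc t = Real.arcsin (Real.sin t) := h3.symm
    _ ≤ Real.arcsin t := Real.monotone_arcsin h2

lemma my_arcsin_le {t : ℝ} (h0 : 0 ≤ t) (h1 : t ≤ 1) : Real.arcsin t ≤ π/2 * t := by
  have ha0 : 0 ≤ Real.arcsin t := Real.arcsin_nonneg.2 h0
  have ha1 : Real.arcsin t ≤ π/2 := Real.arcsin_le_pi_div_two t
  have hs : Real.sin (Real.arcsin t) = t := Real.sin_arcsin (by linarith) h1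
  have hj := Real.mul_le_sin ha0 ha1
  rw [hs, div_mul_eq_mul_div, div_le_iff₀ Real.pi_pos] at hj
  nlinarith [Real.pi_pos]

/-- Phase 1: while the total path length is small compared to `d`,
the path length grows geometrically. -/
lemma phase1 (ε : ℝ) (hε0 : 0 < ε) (hε2 : ε ≤ 2) (N₀ : ℕ) (hN : 1 ≤ N₀) (d : ℝ)
    (hd : π * 12^N₀ ≤ Real.sqrt (2*ε) * d) :
    ∀ n, 1 ≤ n → n ≤ N₀ →
      (1+ε/2) * n ≤ cS ε d n ∧ (1+ε) * (1+ε/2)^(n-1) ≤ cS ε d n ∧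
      cS ε d n ≤ 12^n ∧
      cS ε d n / d ≤ cA ε d n ∧ cA ε d n ≤ π/2 * (cS ε d n / d) := by
  have hπ3 := Real.pi_gt_three
  have hπ315 := Real.pi_lt_d2
  have hs0 : 0 < Real.sqrt (2*ε) := Real.sqrt_pos.2 (by linarith)
  have hs2 : Real.sqrt (2*ε) ≤ 2 := by
    have h := Real.sqrt_le_sqrt (show 2*ε ≤ 4 by linarith)
    have h4 : Real.sqrt 4 = 2 := by
      rw [show (4:ℝ) = 2^2 by norm_num]; exact Real.sqrt_sq (by norm_num)
    rw [h4] at h; exact h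
  have hsq : Real.sqrt (2*ε) ^ 2 = 2*ε := Real.sq_sqrt (by linarith)
  have h12N : (12:ℝ)^N₀ ≥ 12 := by
    calc (12:ℝ)^N₀ ≥ 12^1 := pow_le_pow_right₀ (by norm_num) hN
    _ = 12 := pow_one 12
  have hd0 : 0 < d := by
    by_contra hcon
    push_neg at hcon
    have k1 : Real.sqrt (2*ε) * d ≤ 0 := mul_nonpos_of_nonneg_of_nonpos hs0.le hcon
    have k2 : (0:ℝ) < π * 12^N₀ := by positivity
    linarith
  have hdbig : 18 ≤ d := by
    linarith only [hd, mul_le_mul_of_nonneg_right hs2 hd0.le, h12N,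
      mul_nonneg (by linarith only [hπ3] : (0:ℝ) ≤ π - 3)
        (by positivity : (0:ℝ) ≤ (12:ℝ)^N₀)]
  intro n hn1
  induction n, hn1 using Nat.le_induction with
  | base =>
    intro _
    have hS1 : cS ε d 1 = 1 + ε := by
      show cS ε d 0 + cX ε d 0 = 1 + ε
      simp [cX, cS_zero, cA_zero]
      ring
    have hA1 : cA ε d 1 = Real.arcsin ((1+ε)/d) := by
      rw [cA_succ, cA_zero, zero_add]
      congr 1
      rw [show cX ε d 0 = 1 + ε by simp [cX, cS_zero, cA_zero]; ring]
    have ht0 : 0 ≤ (1+ε)/d := by positivity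
    have ht1 : (1+ε)/d ≤ 1 := by
      rw [div_le_one hd0]; linarith
    refine ⟨?_, ?_, ?_, ?_, ?_⟩
    · rw [hS1]; push_cast; linarith
    · rw [hS1]; norm_num
    · rw [hS1]; norm_num; linarith
    · rw [hS1, hA1]; exact my_le_arcsin ht0 ht1
    · rw [hS1, hA1]; exact my_arcsin_le ht0 ht1
  | succ n hn1 ih =>
    intro hle
    obtain ⟨h1, h2, h3, h4, h5⟩ := ih (by omega)
    set Sn := cS ε d n with hSn
    set An := cA ε d n with hAn
    have hn1R : (1:ℝ) ≤ n := by exact_mod_cast hn1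
    have hn0R : (0:ℝ) ≤ n := by linarith only [hn1R]
    have hεn : 0 ≤ ε * (n:ℝ) := mul_nonneg hε0.le hn0R
    have hSpos : 0 < Sn := by linarith only [h1, hn1R, hεn]
    have hnS : (n:ℝ) ≤ Sn := by linarith only [h1, hεn]
    have hεS : 0 ≤ ε * Sn := mul_nonneg hε0.le hSpos.le
    -- Sn is small compared to d
    have h12n : (12:ℝ)^(n+1) ≤ 12^N₀ := pow_le_pow_right₀ (by norm_num) hle
    have h12n' : (12:ℝ)^n * 12 = 12^(n+1) := by rw [pow_succ]
    have hSN : Sn ≤ 12^N₀ := by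
      linarith only [h3, h12n, h12n', (by positivity : (0:ℝ) ≤ (12:ℝ)^n)]
    have hSd : π * Sn ≤ Real.sqrt (2*ε) * d := by
      linarith only [hd, mul_le_mul_of_nonneg_left hSN Real.pi_pos.le]
    have hdiv : Sn / d ≤ Real.sqrt (2*ε) / π := by
      rw [div_le_div_iff₀ hd0 Real.pi_pos]; linarith only [hSd]
    have hA0 : 0 < An := lt_of_lt_of_le (div_pos hSpos hd0) h4
    have hAub : An ≤ Real.sqrt (2*ε)/2 := by
      calc An ≤ π/2 * (Sn/d) := h5
        _ ≤ π/2 * (Real.sqrt (2*ε)/π) := by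
            apply mul_le_mul_of_nonneg_left hdiv (by positivity)
        _ = Real.sqrt (2*ε)/2 := by field_simp
    have hA1 : An ≤ 1 := by linarith only [hAub, hs2]
    have hA2 : An^2 ≤ ε/2 := by
      have h := mul_self_le_mul_self hA0.le hAub
      calc An^2 = An*An := sq An
        _ ≤ (Real.sqrt (2*ε)/2)*(Real.sqrt (2*ε)/2) := h
        _ = Real.sqrt (2*ε)^2/4 := by ring
        _ = ε/2 := by rw [hsq]; ring
    have hsin : An - An^3/4 ≤ Real.sin An := by
      have := Real.sin_gt_sub_cube hA0; linarith [pow_pos hA0 3]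
    have hdA : Sn ≤ d * An := by
      have h := (div_le_iff₀ hd0).1 h4; linarith only [h]
    have hchord : Sn * (1 - ε/8) ≤ d * Real.sin An := by
      have k1 : d * (An - An^3/4) ≤ d * Real.sin An :=
        mul_le_mul_of_nonneg_left hsin hd0.le
      have k2 : 0 ≤ 1 - An^2/4 := by linarith only [hA2, hε2]
      have k3 : Sn * (1 - An^2/4) ≤ (d * An) * (1 - An^2/4) :=
        mul_le_mul_of_nonneg_right hdA k2
      have k4 : Sn * (1 - ε/8) ≤ Sn * (1 - An^2/4) :=
        mul_le_mul_of_nonneg_left (by linarith only [hA2]) hSpos.le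
      calc Sn * (1 - ε/8) ≤ Sn * (1 - An^2/4) := k4
        _ ≤ (d * An) * (1 - An^2/4) := k3
        _ = d * (An - An^3/4) := by ring
        _ ≤ d * Real.sin An := k1
    -- lower bound for the next step
    have hx_lb : 1 + ε + (1+ε/2) * Sn - n ≤ cX ε d n := by
      show 1 + ε + (1+ε/2) * Sn - n ≤ (2+ε) * (1 + d * Real.sin An) - ((n:ℝ)+1) - Sn
      have k1 : (2+ε) * (Sn * (1 - ε/8)) ≤ (2+ε) * (d * Real.sin An) :=
        mul_le_mul_of_nonneg_left hchord (by linarith only [hε0])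
      have k0 : 0 ≤ ε * (2-ε) * Sn :=
        mul_nonneg (mul_nonneg hε0.le (by linarith only [hε2])) hSpos.le
      linarith only [k1, k0]
    have hxpos : 0 < cX ε d n := by
      linarith only [hx_lb, hnS, hε0, hεS, hSpos]
    have hsinle : Real.sin An ≤ An := Real.sin_le hA0.le
    have hx_ub : cX ε d n ≤ (2+ε) + (2+ε) * (π/2) * Sn := by
      show (2+ε) * (1 + d * Real.sin An) - ((n:ℝ)+1) - Sn ≤ _
      have k1 : d * Real.sin An ≤ d * An := mul_le_mul_of_nonneg_left hsinle hd0.le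
      have k2 : d * An ≤ π/2 * Sn := by
        have h := mul_le_mul_of_nonneg_left h5 hd0.le
        calc d * An ≤ d * (π/2 * (Sn/d)) := h
          _ = π/2 * Sn := by field_simp
      have k3 : (2+ε) * (d * Real.sin An) ≤ (2+ε) * (π/2 * Sn) :=
        mul_le_mul_of_nonneg_left (k1.trans k2) (by linarith only [hε0])
      linarith only [k3, hSpos, hn0R]
    have hSsucc : cS ε d (n+1) = Sn + cX ε d n := cS_succ ε d n
    have hSub : cS ε d (n+1) ≤ 12^(n+1) := by
      rw [hSsucc]
      have k1 : ε * π ≤ 2 * 3.15 :=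
        mul_le_mul hε2 hπ315.le Real.pi_pos.le (by norm_num)
      have k2 : (2+ε) * (π/2) ≤ 63/10 := by linarith only [k1, hπ315]
      have k3 : (2+ε) * (π/2) * Sn ≤ (63/10) * 12^n := by
        have h := mul_le_mul k2 h3 hSpos.le (by norm_num)
        linarith only [h]
      have k4 : (1:ℝ) ≤ 12^n := one_le_pow₀ (by norm_num)
      linarith only [hx_ub, h3, k3, k4, h12n', hε2]
    have h12d : (12:ℝ)^N₀ ≤ d := by
      linarith only [hd, mul_le_mul_of_nonneg_right hs2 hd0.le, hd0,
        mul_nonneg (by linarith only [hπ3] : (0:ℝ) ≤ π - 3)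
          (by positivity : (0:ℝ) ≤ (12:ℝ)^N₀),
        (by positivity : (0:ℝ) < (12:ℝ)^N₀)]
    have hxd : cX ε d n ≤ d := by
      linarith only [hSsucc, hSub, h12n, h12d, hSpos]
    have ht0 : 0 ≤ cX ε d n / d := by positivity
    have ht1 : cX ε d n / d ≤ 1 := by rw [div_le_one hd0]; exact hxd
    have hAsucc : cA ε d (n+1) = An + Real.arcsin (cX ε d n / d) := cA_succ ε d n
    refine ⟨?_, ?_, hSub, ?_, ?_⟩
    · rw [hSsucc]; push_cast
      linarith only [hx_lb, h1, mul_nonneg hε0.le (sub_nonneg.2 hnS), hεn, hε0]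
    · rw [hSsucc]
      have hpow : ((n:ℕ)+1) - 1 = (n - 1) + 1 := by omega
      rw [hpow, pow_succ]
      have k1 : (1+ε/2) * ((1+ε) * (1+ε/2)^(n-1)) ≤ (1+ε/2) * Sn :=
        mul_le_mul_of_nonneg_left h2 (by linarith only [hε0])
      have : (1+ε/2) * ((1+ε) * (1+ε/2)^(n-1)) = (1+ε) * ((1+ε/2)^(n-1) * (1+ε/2)) := by
        ring
      rw [this] at k1
      linarith only [k1, hx_lb, hnS, hε0]
    · rw [hSsucc, hAsucc, add_div]
      exact add_le_add h4 (my_le_arcsin ht0 ht1)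
    · rw [hSsucc, hAsucc, add_div, mul_add]
      exact add_le_add h5 (my_arcsin_le ht0 ht1)

/-- The key lower bound on the next step length in phase 2. -/
lemma xlow (ε : ℝ) (hε0 : 0 < ε) (d : ℝ) (hd0 : 0 < d) (n : ℕ) (B : ℝ) (hB : 0 ≤ B)
    (h1 : cS ε d n / d ≤ cA ε d n) (h2 : cA ε d n ≤ π/2)
    (h3 : 4*((n:ℝ)+3) + B ≤ cS ε d n) :
    4 + ε + B/4 ≤ cX ε d n := by
  have hπ315 := Real.pi_lt_d2
  have hπ3 := Real.pi_gt_three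
  set Sn := cS ε d n with hSn
  set An := cA ε d n with hAn
  have hSpos : 0 ≤ Sn := by
    linarith only [h3, hB, (by positivity : (0:ℝ) ≤ (n:ℝ))]
  have hA0 : 0 ≤ An := le_trans (div_nonneg hSpos hd0.le) h1
  have hj := Real.mul_le_sin hA0 h2
  rw [div_mul_eq_mul_div, div_le_iff₀ Real.pi_pos] at hj
  -- hj : 2 * An ≤ sin An * π
  have hdA : Sn ≤ d * An := by
    have h := (div_le_iff₀ hd0).1 h1; linarith only [h]
  have h5 : 2 * Sn ≤ π * (d * Real.sin An) := by
    have k1 : d * (2 * An) ≤ d * (Real.sin An * π) :=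
      mul_le_mul_of_nonneg_left hj hd0.le
    have k2 : 2 * Sn ≤ 2 * (d * An) := by linarith only [hdA]
    nlinarith [k1, k2]
  have hy0 : 0 ≤ d * Real.sin An := by
    have hsp : 0 ≤ Real.sin An :=
      Real.sin_nonneg_of_nonneg_of_le_pi hA0 (by linarith only [h2, Real.pi_pos])
    exact mul_nonneg hd0.le hsp
  have h6 : (5/4) * Sn ≤ (2+ε) * (d * Real.sin An) := by
    have k1 : 0 ≤ (63/20 - π) * (d * Real.sin An) :=
      mul_nonneg (by linarith only [hπ315] : (0:ℝ) ≤ 63/20 - π) hy0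
    have k2 : 0 ≤ ε * (d * Real.sin An) := mul_nonneg hε0.le hy0
    nlinarith [h5, k1, k2, hy0, hSpos]
  show 4 + ε + B/4 ≤ (2+ε) * (1 + d * Real.sin An) - ((n:ℝ)+1) - Sn
  nlinarith [h6, h3]

/-- Phase 2: linear growth of the path length, with margin `k·ε`. -/
lemma phase2 (ε : ℝ) (hε0 : 0 < ε) (d : ℝ) (hd0 : 0 < d) (N₀ : ℕ)
    (b1 : cS ε d N₀ / d ≤ cA ε d N₀) (b2 : cA ε d N₀ < π/2)
    (b3 : 4*((N₀:ℝ)+3) ≤ cS ε d N₀) :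
    ∀ k : ℕ, (∃ n, π/2 ≤ cA ε d n) ∨
      (cS ε d (N₀+k) / d ≤ cA ε d (N₀+k) ∧ cA ε d (N₀+k) < π/2 ∧
        4*(((N₀:ℝ)+k)+3) + k*ε ≤ cS ε d (N₀+k)) := by
  intro k
  induction k with
  | zero =>
    refine Or.inr ⟨by simpa using b1, by simpa using b2, ?_⟩
    simp only [Nat.add_zero, Nat.cast_zero]
    norm_num
    linarith
  | succ k ih =>
    rcases ih with h | ⟨h1, h2, h3⟩
    · exact Or.inl h
    have hkε : 0 ≤ (k:ℝ) * ε := mul_nonneg (by positivity) hε0.le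
    have hx := xlow ε hε0 d hd0 (N₀+k) ((k:ℝ)*ε) hkε
      h1 h2.le (by push_cast at h3 ⊢; linarith only [h3])
    set n := N₀ + k with hn
    have hSpos : 0 ≤ cS ε d n := by
      push_cast at h3
      linarith only [h3, hkε, (by positivity : (0:ℝ) ≤ (N₀:ℝ)),
        (by positivity : (0:ℝ) ≤ (k:ℝ))]
    have hA0 : 0 ≤ cA ε d n := le_trans (div_nonneg hSpos hd0.le) h1
    have hxpos : 0 < cX ε d n := by linarith only [hx, hε0, hkε]
    rcases le_or_gt (cX ε d n) d with hxd | hdx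
    · have ht0 : 0 ≤ cX ε d n / d := by positivity
      have ht1 : cX ε d n / d ≤ 1 := by rw [div_le_one hd0]; exact hxd
      have hAsucc : cA ε d (n+1) = cA ε d n + Real.arcsin (cX ε d n / d) :=
        cA_succ ε d n
      have hSsucc : cS ε d (n+1) = cS ε d n + cX ε d n := cS_succ ε d n
      have hlow : cS ε d (n+1) / d ≤ cA ε d (n+1) := by
        rw [hSsucc, hAsucc, add_div]
        exact add_le_add h1 (my_le_arcsin ht0 ht1)
      rcases le_or_gt (π/2) (cA ε d (n+1)) with hdone | hlt
      · exact Or.inl ⟨n+1, hdone⟩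
      · refine Or.inr ?_
        have heq : N₀ + (k+1) = n + 1 := by omega
        rw [heq]
        refine ⟨hlow, hlt, ?_⟩
        rw [hSsucc]
        push_cast
        push_cast at h3
        linarith only [h3, hx, hkε]
    · refine Or.inl ⟨n+1, ?_⟩
      have hAsucc : cA ε d (n+1) = cA ε d n + Real.arcsin (cX ε d n / d) :=
        cA_succ ε d n
      have harc : Real.arcsin (cX ε d n / d) = π/2 :=
        Real.arcsin_of_one_le ((one_le_div hd0).2 hdx.le)
      rw [hAsucc, harc]; linarith

theorem stmt_13 (ε : ℝ) (hε0 : 0 < ε) (hε2 : ε ≤ 2) :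
    ∃ dε : ℝ, 0 < dε ∧ ∀ d : ℝ, dε ≤ d →
      ∃ n : ℕ, circleAngle (2 + ε) d n ≥ Real.pi / 2 := by
  have hπ3 := Real.pi_gt_three
  have hπ315 := Real.pi_lt_d2
  have hs0 : 0 < Real.sqrt (2*ε) := Real.sqrt_pos.2 (by linarith)
  have hs2 : Real.sqrt (2*ε) ≤ 2 := by
    have h := Real.sqrt_le_sqrt (show 2*ε ≤ 4 by linarith)
    have h4 : Real.sqrt 4 = 2 := by
      rw [show (4:ℝ) = 2^2 by norm_num]; exact Real.sqrt_sq (by norm_num)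
    rw [h4] at h; exact h
  obtain ⟨m, hm2, hm64⟩ : ∃ m : ℕ, 2 ≤ m ∧ (64:ℝ)/ε^2 ≤ m := by
    refine ⟨⌈(64:ℝ)/ε^2⌉₊ + 2, by omega, ?_⟩
    have h1 := Nat.le_ceil ((64:ℝ)/ε^2)
    have h2 : (⌈(64:ℝ)/ε^2⌉₊ : ℝ) ≤ ((⌈(64:ℝ)/ε^2⌉₊ + 2 : ℕ) : ℝ) := by
      push_cast; linarith
    linarith
  obtain ⟨N₀, hN₀, hN1⟩ : ∃ N : ℕ, N = 2*m ∧ 1 ≤ N := ⟨2*m, rfl, by omega⟩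
  have hmε : 64 ≤ (m:ℝ) * ε^2 := by
    rw [div_le_iff₀ (by positivity : (0:ℝ) < ε^2)] at hm64
    linarith
  refine ⟨π * 12^N₀ / Real.sqrt (2*ε), by positivity, ?_⟩
  intro d hdε
  have hd : π * 12^N₀ ≤ Real.sqrt (2*ε) * d := by
    rw [div_le_iff₀ hs0] at hdε
    linarith [hdε]
  have hd0 : 0 < d := by
    by_contra hcon
    push_neg at hcon
    have k1 : Real.sqrt (2*ε) * d ≤ 0 := mul_nonpos_of_nonneg_of_nonpos hs0.le hcon
    have k2 : (0:ℝ) < π * 12^N₀ := by positivity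
    linarith
  obtain ⟨p1, p2, p3, p4, p5⟩ := phase1 ε hε0 hε2 N₀ hN1 d hd N₀ hN1 le_rfl
  -- the base of phase 2
  have hmR2 : (2:ℝ) ≤ m := by exact_mod_cast hm2
  have hgeom : 4*((N₀:ℝ)+3) ≤ cS ε d N₀ := by
    have k0 : (0:ℝ) ≤ (m:ℝ)*(ε/2) := by positivity
    have e1 : (m:ℝ)*(ε/2) ≤ (1+ε/2)^m := by
      have h := one_add_mul_le_pow (by linarith : (-2:ℝ) ≤ ε/2) m
      linarith only [h]
    have e3 : ((m:ℝ)*(ε/2))^2 ≤ ((1+ε/2)^m)^2 := pow_le_pow_left₀ k0 e1 2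
    have e2 : ((1+ε/2)^m)^2 = (1+ε/2)^N₀ := by
      rw [← pow_mul]
      congr 1
      omega
    have hp : (0:ℝ) ≤ (1+ε/2)^(N₀-1) := by positivity
    have e4 : (1+ε/2)^N₀ ≤ (1+ε) * (1+ε/2)^(N₀-1) := by
      have hNn : N₀ = (N₀ - 1) + 1 := by omega
      have hpε : 0 ≤ (1+ε/2)^(N₀-1) * ε := mul_nonneg hp hε0.le
      calc (1+ε/2)^N₀ = (1+ε/2)^(N₀-1) * (1+ε/2) := by rw [← pow_succ, ← hNn]
        _ ≤ (1+ε) * (1+ε/2)^(N₀-1) := by linarith only [hpε, hp]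
    have e6 : 16*(m:ℝ) ≤ ((m:ℝ)*(ε/2))^2 := by
      have h := mul_le_mul_of_nonneg_left hmε (by positivity : (0:ℝ) ≤ (m:ℝ))
      have e5 : ((m:ℝ)*(ε/2))^2 = (m:ℝ) * ((m:ℝ)*ε^2) / 4 := by ring
      rw [e5]
      linarith only [h, hmR2]
    have e7 : 4*((N₀:ℝ)+3) ≤ 16*(m:ℝ) := by
      have hc : (N₀:ℝ) = 2*(m:ℝ) := by rw [hN₀]; push_cast; ring
      rw [hc]; linarith only [hmR2]
    linarith only [e2, e3, e4, e6, e7, p2]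
  have hA2 : cA ε d N₀ < π/2 := by
    have hSd : π * cS ε d N₀ ≤ Real.sqrt (2*ε) * d := by
      linarith only [hd, mul_le_mul_of_nonneg_left p3 Real.pi_pos.le]
    have hdiv : cS ε d N₀ / d ≤ Real.sqrt (2*ε) / π := by
      rw [div_le_div_iff₀ hd0 Real.pi_pos]; linarith only [hSd]
    have h : cA ε d N₀ ≤ Real.sqrt (2*ε)/2 := by
      calc cA ε d N₀ ≤ π/2 * (cS ε d N₀/d) := p5
        _ ≤ π/2 * (Real.sqrt (2*ε)/π) := by
            apply mul_le_mul_of_nonneg_left hdiv (by positivity)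
        _ = Real.sqrt (2*ε)/2 := by field_simp
    linarith
  obtain ⟨k, hkd⟩ : ∃ k : ℕ, 4*d ≤ (k:ℝ)*ε := by
    refine ⟨⌈4*d/ε⌉₊, ?_⟩
    have h1 : 4*d/ε ≤ ((⌈4*d/ε⌉₊ : ℕ) : ℝ) := Nat.le_ceil _
    rw [div_le_iff₀ hε0] at h1
    linarith
  rcases phase2 ε hε0 d hd0 N₀ p4 hA2 hgeom k with ⟨n, hn⟩ | ⟨h1, h2, h3⟩
  · exact ⟨n, hn⟩
  · have hkε : 0 ≤ (k:ℝ) * ε := mul_nonneg (by positivity) hε0.le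
    have hx := xlow ε hε0 d hd0 (N₀+k) ((k:ℝ)*ε) hkε
      h1 h2.le (by push_cast at h3 ⊢; linarith only [h3])
    have hdx : d < cX ε d (N₀+k) := by linarith only [hx, hkd, hε0]
    have hSpos : 0 ≤ cS ε d (N₀+k) := by
      push_cast at h3
      linarith only [h3, hkε, (by positivity : (0:ℝ) ≤ (N₀:ℝ)),
        (by positivity : (0:ℝ) ≤ (k:ℝ))]
    have hA0 : 0 ≤ cA ε d (N₀+k) := le_trans (div_nonneg hSpos hd0.le) h1
    refine ⟨N₀+k+1, ?_⟩
    have harc : Real.arcsin (cX ε d (N₀+k) / d) = π/2 :=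
      Real.arcsin_of_one_le ((one_le_div hd0).2 hdx.le)
    show π/2 ≤ cA ε d (N₀+k+1)
    rw [cA_succ, harc]
    linarith
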